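/- arXiv:1001.0622 — 2 statements merged into one kernel-verified Lean document; each statement's English description precedes it below -/
import Mathlib

section
/- Let 1 < ρ < ∞ with conjugate exponent ϱ (1/ρ + 1/ϱ = 1). For all nonnegative integers m, q', every A ∈ M_{n,n'}(m,q';F) and all row vectors h^1, h^2, ..., h^m ∈ M_{n,n}(0,1;F), one has ‖((h^1⊙h^2⊙···⊙h^m)/m!)·A‖_ρ ≤ ‖h^1‖_ϱ·‖h^2‖_ϱ···‖h^m‖_ϱ·‖A‖_ρ, where ‖h‖_ϱ = (Σ_i |h_i|^ϱ)^{1/ϱ} and the dot denotes the ordinary matrix product. -/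
open scoped BigOperators ENNReal

noncomputable section

/-- The degree `|α|` of a multi-index `α ∈ ℕ^n`. -/
def mdeg {n : ℕ} (α : Fin n → ℕ) : ℕ := ∑ i, α i

/-- The factorial `α! = α₁! ⋯ αₙ!` of a multi-index. -/
def mfact {n : ℕ} (α : Fin n → ℕ) : ℕ := ∏ i, (α i).factorial

/-- The multi-indices in `ℕ^n` of degree `p`. -/
abbrev MIdx (n p : ℕ) := {α : Fin n → ℕ // mdeg α = p}

instance (n p : ℕ) : Fintype (MIdx n p) :=
  Fintype.subtype (Finset.Nat.antidiagonalTuple n p) (fun α => by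
    simp [Finset.Nat.mem_antidiagonalTuple, mdeg])

/-- The space `M(p,p';F)` of matrices with rows indexed by degree-`p` multi-indices in `ℕ^n`
and columns indexed by degree-`p'` multi-indices in `ℕ^n'`. -/
abbrev MMat (n n' p p' : ℕ) (F : Type*) := MIdx n p → MIdx n' p' → F

lemma mdeg_sub {n p q : ℕ} (α : MIdx n (p + q)) (β : MIdx n p) (h : ∀ i, β.1 i ≤ α.1 i) :
    mdeg (α.1 - β.1) = q := by
  have h1 : mdeg (α.1 - β.1) + mdeg β.1 = mdeg α.1 := by
    simp only [mdeg, ← Finset.sum_add_distrib]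
    exact Finset.sum_congr rfl fun i _ => Nat.sub_add_cancel (h i)
  have h2 := α.2
  have h3 := β.2
  omega

/-- The product `⊙` of `A ∈ M(p,p';F)` and `B ∈ M(q,q';F)`:
`(A⊙B)_{α,α'} = Σ_{β≤α, β'≤α', |β|=p, |β'|=p'} (α!/(β!(α−β)!)) A_{β,β'} B_{α−β,α'−β'}`. -/
def oprod {n n' p p' q q' : ℕ} {F : Type*} [RCLike F]
    (A : MMat n n' p p' F) (B : MMat n n' q q' F) : MMat n n' (p + q) (p' + q') F :=
  fun α α' =>
    ∑ β : MIdx n p, ∑ β' : MIdx n' p',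
      if h : (∀ i, β.1 i ≤ α.1 i) ∧ (∀ j, β'.1 j ≤ α'.1 j) then
        ((mfact α.1 : F) / ((mfact β.1 : F) * (mfact (α.1 - β.1) : F))) * A β β' *
          B ⟨α.1 - β.1, mdeg_sub α β h.1⟩ ⟨α'.1 - β'.1, mdeg_sub α' β' h.2⟩
      else 0

/-- Change the degree parameter of a multi-index along an equality of natural numbers. -/
def recast {n a b : ℕ} (h : a = b) (α : MIdx n a) : MIdx n b := ⟨α.1, h ▸ α.2⟩

/-- The ordinary matrix product. -/
def mmul {n n' p q q' : ℕ} {F : Type*} [RCLike F]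
    (A : MMat n n p q F) (B : MMat n n' q q' F) : MMat n n' p q' F :=
  fun α α' => ∑ β : MIdx n q, A α β * B β α'

/-- The `m`-th `⊙`-power of a row `h ∈ M(0,1;F)`. -/
def opowRow {n : ℕ} {F : Type*} [RCLike F] (h : MMat n n 0 1 F) : (m : ℕ) → MMat n n 0 m F
  | 0 => fun _ _ => 1
  | m + 1 => fun z α => oprod h (opowRow h m) z (recast (Nat.add_comm m 1) α)

/-- The `m`-th `⊙`-power of a column `v ∈ M(1,0;F)`. -/
def opowCol {n : ℕ} {F : Type*} [RCLike F] (v : MMat n n 1 0 F) : (m : ℕ) → MMat n n m 0 F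
  | 0 => fun _ _ => 1
  | m + 1 => fun α z => oprod v (opowCol v m) (recast (Nat.add_comm m 1) α) z

/-- The `⊙`-product `h¹ ⊙ h² ⊙ ⋯ ⊙ hᵐ` of a family of rows `hⁱ ∈ M(0,1;F)`. -/
def oprodRowFamily {n : ℕ} {F : Type*} [RCLike F] :
    (m : ℕ) → (Fin m → MMat n n 0 1 F) → MMat n n 0 m F
  | 0, _ => fun _ _ => 1
  | m + 1, hs => fun z α =>
      oprod (hs 0) (oprodRowFamily m fun i => hs i.succ) z (recast (Nat.add_comm m 1) α)

/-- The row vector `(h₁,…,hₙ) ∈ M(0,1;F)` determined by `h : Fin n → F`; its entry at the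
degree-one column index `α'` is `h^{α'}`. -/
def rowOf {n : ℕ} {F : Type*} [RCLike F] (h : Fin n → F) : MMat n n 0 1 F :=
  fun _ α' => ∏ i, h i ^ α'.1 i

/-- The column vector `(v₁,…,vₙ) ∈ M(1,0;F)` determined by `v : Fin n → F`. -/
def colOf {n : ℕ} {F : Type*} [RCLike F] (v : Fin n → F) : MMat n n 1 0 F :=
  fun α _ => ∏ i, v i ^ α.1 i

/-- The unit matrix `E_k ∈ M_{n,n}(k,k;F)`. -/
def unitMat (n k : ℕ) (F : Type*) [RCLike F] : MMat n n k k F :=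
  fun α β => if α = β then 1 else 0

/-- The `ρ`-norm `‖A‖_ρ = (Σ_{α,α'} |A_{α,α'}|^ρ/(α!(p!p'!)^{ρ−1}))^{1/ρ}` on `M(p,p';F)`. -/
def rnorm {n n' p p' : ℕ} {F : Type*} [RCLike F] (ρ : ℝ) (A : MMat n n' p p' F) : ℝ :=
  (∑ α : MIdx n p, ∑ α' : MIdx n' p',
      ‖A α α'‖ ^ ρ /
        ((mfact α.1 : ℝ) * ((p.factorial * p'.factorial : ℕ) : ℝ) ^ (ρ - 1))) ^ (1 / ρ)

/-- The `∞`-norm `‖A‖_∞ = sup_{α,α'} |A_{α,α'}| / (p!p'!)` on `M(p,p';F)`. -/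
def rnormInf {n n' p p' : ℕ} {F : Type*} [RCLike F] (A : MMat n n' p p' F) : ℝ :=
  (⨆ x : MIdx n p × MIdx n' p', ‖A x.1 x.2‖) / ((p.factorial * p'.factorial : ℕ) : ℝ)

/-- The `σ`-norm of a vector in `F^n`, for a real exponent `σ`. -/
def vnorm {n : ℕ} {F : Type*} [RCLike F] (σ : ℝ) (h : Fin n → F) : ℝ :=
  (∑ i, ‖h i‖ ^ σ) ^ (1 / σ)

/-- The `σ`-norm of a vector in `F^n`, for an extended real exponent `σ`
(`= max_i |h_i|` when `σ = ∞`). -/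
def vnormE {n : ℕ} {F : Type*} [RCLike F] (σ : ℝ≥0∞) (h : Fin n → F) : ℝ :=
  if σ = ∞ then ⨆ i, ‖h i‖ else (∑ i, ‖h i‖ ^ σ.toReal) ^ (1 / σ.toReal)

/-- Absolute convergence of the power series `Σ_m x^{(m)}/m!·A(m)` at the point `h ∈ F^n`:
for every column index `α'` of degree `q'`, the family `|h^α/α! · A(|α|)_{α,α'}|`, indexed by
all multi-indices `α ∈ ℕ^n`, is summable. -/
def AbsConvAt {n n' q' : ℕ} {F : Type*} [RCLike F]
    (A : (m : ℕ) → MMat n n' m q' F) (h : Fin n → F) : Prop :=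
  ∀ α' : MIdx n' q', Summable fun α : Fin n → ℕ =>
    ‖(∏ i, h i ^ α i) / (mfact α : F) * A (mdeg α) ⟨α, rfl⟩ α'‖

/-- `r = limsup_m ‖A(m)‖_ρ^{1/m}`, the reciprocal of the radius of convergence,
computed in `ℝ≥0∞`. -/
def convRadiusInv {n n' q' : ℕ} {F : Type*} [RCLike F] (ρ : ℝ)
    (A : (m : ℕ) → MMat n n' m q' F) : ℝ≥0∞ :=
  Filter.atTop.limsup fun m : ℕ => ENNReal.ofReal (rnorm ρ (A m)) ^ (1 / (m : ℝ))

/-- `r = limsup_m ‖A(m)‖_∞^{1/m}` computed in `ℝ≥0∞`. -/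
def convRadiusInvInf {n n' q' : ℕ} {F : Type*} [RCLike F]
    (A : (m : ℕ) → MMat n n' m q' F) : ℝ≥0∞ :=
  Filter.atTop.limsup fun m : ℕ => ENNReal.ofReal (rnormInf (A m)) ^ (1 / (m : ℝ))

/-!
Expanding the `⊙`-product, `(h¹⊙⋯⊙hᵐ)_γ` is the sum of `∏ₖ hᵏ_{f k}` over the maps
`f : Fin m → Fin n` with multiplicity vector `count f = γ`. Hence each entry of `(h¹⊙⋯⊙hᵐ)·A`
is the sum over all `f` of `∏ₖ hᵏ_{f k} · A_{count f, α'}`, and Hölder's inequality over `f`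
splits off `∏ₖ ‖hᵏ‖_ϱ`. Since exactly `m!/γ!` maps have multiplicity vector `γ`, the remaining
factor is the `γ!`-weighted `ρ`-sum that defines `‖A‖_ρ`.
-/

open Finset

lemma mdeg_add {n : ℕ} (a b : Fin n → ℕ) : mdeg (a + b) = mdeg a + mdeg b := sum_add_distrib

namespace MIdx

variable {n : ℕ}

instance : Unique (MIdx n 0) where
  default := ⟨0, by simp [mdeg]⟩
  uniq z := Subtype.ext <| funext fun i => by
    simpa using (sum_eq_zero_iff.mp z.2) i (mem_univ i)

@[simp]
lemma default_val : (default : MIdx n 0).1 = 0 := rfl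

def add {p q : ℕ} (β : MIdx n p) (δ : MIdx n q) : MIdx n (p + q) :=
  ⟨β.1 + δ.1, by rw [mdeg_add, β.2, δ.2]⟩

lemma add_injective {p q : ℕ} (β : MIdx n p) : Function.Injective (β.add (q := q)) :=
  fun _ _ h => Subtype.ext (add_left_cancel (congrArg Subtype.val h))

lemma add_sub_of_le {p q : ℕ} {β : MIdx n p} {γ : MIdx n (p + q)} (h : ∀ i, β.1 i ≤ γ.1 i) :
    β.add ⟨γ.1 - β.1, mdeg_sub γ β h⟩ = γ :=
  Subtype.ext (add_tsub_cancel_of_le h)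

def single (j : Fin n) : MIdx n 1 := ⟨Pi.single j 1, by simp [mdeg]⟩

lemma single_bijective : Function.Bijective (single (n := n)) := by
  refine ⟨fun i j h => by simpa [single, Pi.single_apply] using congrFun (congrArg Subtype.val h) i,
    fun β => ?_⟩
  obtain ⟨j, hj⟩ := (Finsupp.sum_eq_one_iff (Finsupp.equivFunOnFinite.symm β.1)).mp
    (by rw [Finsupp.sum_fintype _ _ fun _ => rfl]; exact β.2)
  refine ⟨j, Subtype.ext ?_⟩
  simpa [single, ← Finsupp.single_eq_pi_single] using (congrArg Finsupp.equivFunOnFinite hj).symm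

def count {m : ℕ} (f : Fin m → Fin n) : MIdx n m :=
  ⟨∑ k, Pi.single (f k) 1, by simp only [mdeg, Finset.sum_apply]; rw [sum_comm]; simp⟩

lemma count_cons {m : ℕ} (j : Fin n) (g : Fin m → Fin n) :
    count (Fin.cons j g : Fin (m + 1) → Fin n) =
      recast (Nat.add_comm 1 m) ((single j).add (count g)) :=
  Subtype.ext (Fin.sum_univ_succ _)

lemma sum_recast {M : Type*} [AddCommMonoid M] {a b : ℕ} (h : a = b) (X : MIdx n b → M) :
    ∑ γ, X (recast h γ) = ∑ γ, X γ := by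
  subst h; rfl

lemma sum_dite_le_eq_sum_add {M : Type*} [AddCommMonoid M] {p q : ℕ} (β : MIdx n p)
    (Ψ : MIdx n (p + q) → MIdx n q → M) :
    ∑ γ : MIdx n (p + q),
      (if h : ∀ i, β.1 i ≤ γ.1 i then Ψ γ ⟨γ.1 - β.1, mdeg_sub γ β h⟩ else 0) =
      ∑ δ, Ψ (β.add δ) δ := by
  refine (Fintype.sum_of_injective _ β.add_injective _ _ (fun γ hγ => dif_neg fun h =>
    hγ ⟨_, add_sub_of_le h⟩) fun δ => ?_).symm
  have hle : ∀ i, β.1 i ≤ (β.add δ).1 i := fun i => Nat.le_add_right _ _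
  rw [dif_pos hle]
  congr
  exact Subtype.ext (add_tsub_cancel_left _ _).symm

lemma sum_apply_mul_eq_sum_single_add {R : Type*} [Semiring R] {m : ℕ} (j : Fin n)
    (w : MIdx n (m + 1) → R) :
    ∑ γ : MIdx n (m + 1), (γ.1 j : R) * w γ =
      ∑ δ : MIdx n m, ((δ.1 j + 1 : ℕ) : R) * w (recast (Nat.add_comm 1 m) ((single j).add δ)) := by
  rw [← sum_recast (Nat.add_comm 1 m)]
  refine (Fintype.sum_of_injective _ (single j).add_injective _ _ (fun γ hγ => ?_) fun δ => ?_).symm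
  · suffices γ.1 j = 0 by simp [recast, this]
    by_contra h
    refine hγ ⟨_, add_sub_of_le (β := single j) fun i => ?_⟩
    rcases eq_or_ne i j with rfl | hij
    · simpa [single, Nat.one_le_iff_ne_zero] using h
    · simp [single, hij]
  · simp [MIdx.add, single, recast, add_comm]

end MIdx

open MIdx

section Oprod

variable {n n' p' q' : ℕ} {F : Type*} [RCLike F]

lemma oprod_apply_deg_zero (A : MMat n n' 0 p' F) (B : MMat n n' 0 q' F) (z : MIdx n 0)
    (γ : MIdx n' (p' + q')) :
    oprod A B z γ = ∑ β, if h : ∀ j, β.1 j ≤ γ.1 j then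
      A z β * B z ⟨γ.1 - β.1, mdeg_sub γ β h⟩ else 0 := by
  obtain rfl := Subsingleton.elim z default
  simp [oprod, mfact]
  rfl

lemma sum_oprod_mul (A : MMat n n' 0 p' F) (B : MMat n n' 0 q' F) (z : MIdx n 0)
    (G : MIdx n' (p' + q') → F) :
    ∑ γ, oprod A B z γ * G γ = ∑ β, ∑ δ, A z β * B z δ * G (β.add δ) := by
  simp_rw [oprod_apply_deg_zero, sum_mul, dite_mul, zero_mul]
  rw [sum_comm]
  exact sum_congr rfl fun β _ => sum_dite_le_eq_sum_add β fun γ δ => A z β * B z δ * G γ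

end Oprod

section

variable {n : ℕ} {F : Type*} [RCLike F]

theorem sum_oprodRowFamily_mul (z : MIdx n 0) : ∀ {m : ℕ} (r : Fin m → MMat n n 0 1 F)
    (G : MIdx n m → F), ∑ γ, oprodRowFamily m r z γ * G γ =
      ∑ f : Fin m → Fin n, (∏ k, r k z (single (f k))) * G (count f)
  | 0, r, G => by simp [oprodRowFamily, Subsingleton.elim (count _) default]
  | m + 1, r, G => by
    have IH := fun j => sum_oprodRowFamily_mul z (fun k => r k.succ)
      (fun δ => G (recast (Nat.add_comm 1 m) ((single j).add δ)))
    calc ∑ γ, oprodRowFamily (m + 1) r z γ * G γ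
        = ∑ γ, oprod (r 0) (oprodRowFamily m fun k => r k.succ) z γ *
            G (recast (Nat.add_comm 1 m) γ) :=
          sum_recast (Nat.add_comm m 1) fun γ =>
            oprod (r 0) (oprodRowFamily m fun k => r k.succ) z γ * G (recast (Nat.add_comm 1 m) γ)
      _ = ∑ j, r 0 z (single j) * ∑ δ, oprodRowFamily m (fun k => r k.succ) z δ *
            G (recast (Nat.add_comm 1 m) ((single j).add δ)) := by
          rw [sum_oprod_mul, ← Fintype.sum_bijective _ single_bijective _ _ fun _ => rfl]
          simp_rw [mul_sum, mul_assoc]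
      _ = ∑ f : Fin (m + 1) → Fin n, (∏ k, r k z (single (f k))) * G (count f) := by
          simp_rw [IH, mul_sum, ← (Fin.consEquiv fun _ => Fin n).sum_comp, Fintype.sum_prod_type]
          simp [Fin.consEquiv, count_cons, Fin.prod_univ_succ, mul_assoc]

@[simp]
lemma mfact_zero : mfact (0 : Fin n → ℕ) = 1 := by simp [mfact]

lemma mfact_single_add (j : Fin n) (δ : Fin n → ℕ) :
    mfact (Pi.single j 1 + δ) = (δ j + 1) * mfact δ := by
  simp only [mfact, ← mul_prod_erase univ _ (mem_univ j)]
  rw [prod_congr rfl fun i hi => by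
    rw [Pi.add_apply, Pi.single_eq_of_ne (ne_of_mem_erase hi), zero_add]]
  simp [Nat.factorial_succ, mul_assoc, add_comm]

/-- Each `γ : MIdx n m` is `count f` for exactly `m! / γ!` maps `f`. -/
theorem sum_mfact_count_mul {R : Type*} [CommSemiring R] :
    ∀ {m : ℕ} (w : MIdx n m → R), ∑ f : Fin m → Fin n, (mfact (count f).1 : R) * w (count f) =
      m.factorial * ∑ γ, w γ
  | 0, w => by simp [mfact, Subsingleton.elim (count _) default]
  | m + 1, w => by
    have IH := fun j => sum_mfact_count_mul (m := m) (R := R)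
      fun δ => (δ.1 j + 1 : ℕ) * w (recast (Nat.add_comm 1 m) ((single j).add δ))
    calc ∑ f : Fin (m + 1) → Fin n, (mfact (count f).1 : R) * w (count f)
        = ∑ j, ∑ g : Fin m → Fin n, (mfact (count g).1 : R) *
            ((count g).1 j + 1 : ℕ) * w (recast (Nat.add_comm 1 m) ((single j).add (count g))) := by
          simp_rw [← (Fin.consEquiv fun _ => Fin n).sum_comp, Fintype.sum_prod_type]
          refine sum_congr rfl fun j _ => sum_congr rfl fun g _ => ?_
          simp only [Fin.consEquiv, Equiv.coe_fn_mk, count_cons]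
          rw [show (recast _ ((single j).add (count g))).1 = Pi.single j 1 + (count g).1 from rfl,
            mfact_single_add]
          push_cast
          ring
      _ = m.factorial * ∑ j, ∑ γ : MIdx n (m + 1), (γ.1 j : R) * w γ := by
          simp_rw [mul_assoc, IH, ← mul_sum, sum_apply_mul_eq_sum_single_add]
      _ = (m + 1).factorial * ∑ γ, w γ := by
          rw [sum_comm]
          simp_rw [← sum_mul, ← Nat.cast_sum, show ∀ γ : MIdx n (m + 1), ∑ i, γ.1 i = m + 1 from
            fun γ => γ.2, ← mul_sum, Nat.factorial_succ]
          push_cast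
          ring

lemma sum_prod_mul_le {ι κ : Type*} [Fintype ι] [DecidableEq ι] [Fintype κ] {p q : ℝ}
    (hpq : p.HolderConjugate q) (u : ι → κ → ℝ) (hu : ∀ i j, 0 ≤ u i j) (b : (ι → κ) → ℝ)
    (hb : ∀ f, 0 ≤ b f) :
    ∑ f, (∏ i, u i (f i)) * b f ≤
      (∏ i, (∑ j, u i j ^ p) ^ (1 / p)) * (∑ f, b f ^ q) ^ (1 / q) := by
  convert Real.inner_le_Lp_mul_Lq_of_nonneg univ hpq
    (fun f _ => prod_nonneg fun i _ => hu i (f i)) fun f _ => hb f using 2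
  simp_rw [Real.finsetProd_rpow _ _ (fun i _ => sum_nonneg fun j _ => Real.rpow_nonneg (hu i j) _),
    ← Real.finsetProd_rpow _ _ (fun i _ => hu i _), Fintype.prod_sum]

lemma vnorm_nonneg (σ : ℝ) (h : Fin n → F) : 0 ≤ vnorm σ h := by
  unfold vnorm; positivity

lemma rowOf_single (h : Fin n → F) (z : MIdx n 0) (j : Fin n) : rowOf h z (single j) = h j := by
  simp [rowOf, single, Pi.single_apply, pow_ite]

theorem norm_sum_oprodRowFamily_mul_le {m : ℕ} {ρ ϱ : ℝ} (hϱρ : ϱ.HolderConjugate ρ)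
    (hs : Fin m → Fin n → F) (z : MIdx n 0) (a : MIdx n m → F) :
    ‖∑ γ, oprodRowFamily m (fun i => rowOf (hs i)) z γ * a γ‖ ≤
      (∏ i, vnorm ϱ (hs i)) * (m.factorial * ∑ γ, ‖a γ‖ ^ ρ / mfact γ.1) ^ (1 / ρ) := by
  have hfiber : ∑ f : Fin m → Fin n, ‖a (count f)‖ ^ ρ =
      m.factorial * ∑ γ, ‖a γ‖ ^ ρ / mfact γ.1 := by
    rw [← sum_mfact_count_mul]
    refine sum_congr rfl fun f _ => (mul_div_cancel₀ _ ?_).symm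
    exact_mod_cast (prod_pos fun i _ => Nat.factorial_pos _).ne'
  calc ‖∑ γ, oprodRowFamily m (fun i => rowOf (hs i)) z γ * a γ‖
      = ‖∑ f : Fin m → Fin n, (∏ k, hs k (f k)) * a (count f)‖ := by
        simp_rw [sum_oprodRowFamily_mul, rowOf_single]
    _ ≤ ∑ f : Fin m → Fin n, (∏ k, ‖hs k (f k)‖) * ‖a (count f)‖ :=
        (norm_sum_le _ _).trans_eq (by simp_rw [norm_mul, norm_prod])
    _ ≤ (∏ i, vnorm ϱ (hs i)) * (∑ f : Fin m → Fin n, ‖a (count f)‖ ^ ρ) ^ (1 / ρ) :=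
        sum_prod_mul_le hϱρ _ (fun _ _ => norm_nonneg _) _ fun _ => norm_nonneg _
    _ = _ := by rw [hfiber]

theorem norm_sum_oprodRowFamily_div_mul_rpow_le {m : ℕ} {ρ ϱ : ℝ} (hϱρ : ϱ.HolderConjugate ρ)
    (hs : Fin m → Fin n → F) (z : MIdx n 0) (a : MIdx n m → F) :
    ‖∑ γ, oprodRowFamily m (fun i => rowOf (hs i)) z γ / m.factorial * a γ‖ ^ ρ ≤
      (∏ i, vnorm ϱ (hs i)) ^ ρ * ∑ γ, ‖a γ‖ ^ ρ / (mfact γ.1 * (m.factorial : ℝ) ^ (ρ - 1)) := by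
  have hρ : 0 < ρ := hϱρ.symm.pos
  have hM : (0 : ℝ) < m.factorial := by positivity
  set X := ∑ γ, ‖a γ‖ ^ ρ / mfact γ.1
  have hV : 0 ≤ ∏ i, vnorm ϱ (hs i) := prod_nonneg fun i _ => vnorm_nonneg ϱ (hs i)
  have hbound : ‖∑ γ, oprodRowFamily m (fun i => rowOf (hs i)) z γ / m.factorial * a γ‖ ≤
      (∏ i, vnorm ϱ (hs i)) * (m.factorial * X) ^ (1 / ρ) / m.factorial := by
    simp_rw [div_mul_eq_mul_div, ← sum_div, norm_div, RCLike.norm_natCast]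
    gcongr
    exact norm_sum_oprodRowFamily_mul_le hϱρ hs z a
  calc _ ≤ ((∏ i, vnorm ϱ (hs i)) * (m.factorial * X) ^ (1 / ρ) / m.factorial) ^ ρ := by gcongr
    _ = (∏ i, vnorm ϱ (hs i)) ^ ρ * (X / (m.factorial : ℝ) ^ (ρ - 1)) := by
      rw [Real.div_rpow (by positivity) hM.le, Real.mul_rpow hV (by positivity), one_div,
        Real.rpow_inv_rpow (by positivity) hρ.ne', Real.rpow_sub_one hM.ne']
      field_simp
    _ = _ := by rw [sum_div]; simp_rw [div_div]

theorem rnorm_le_mul_rnorm_of_forall_norm_rpow_le {n₀ n' m q' : ℕ} {ρ c : ℝ} (hρ : 0 < ρ)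
    (hc : 0 ≤ c) {C : MMat n₀ n' 0 q' F} {A : MMat n n' m q' F}
    (h : ∀ α', ‖C default α'‖ ^ ρ ≤
      c ^ ρ * ∑ γ, ‖A γ α'‖ ^ ρ / (mfact γ.1 * (m.factorial : ℝ) ^ (ρ - 1))) :
    rnorm ρ C ≤ c * rnorm ρ A := by
  unfold rnorm
  rw [← Real.rpow_rpow_inv hc hρ.ne', ← one_div, ← Real.mul_rpow (by positivity) (by positivity)]
  gcongr
  simp only [Fintype.sum_unique, default_val, mfact_zero, Nat.factorial_zero, Nat.cast_one,
    one_mul, mul_sum]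
  rw [sum_comm]
  refine sum_le_sum fun α' _ => ?_
  calc _ ≤ (c ^ ρ * ∑ γ, ‖A γ α'‖ ^ ρ / (mfact γ.1 * (m.factorial : ℝ) ^ (ρ - 1))) /
        (q'.factorial : ℝ) ^ (ρ - 1) := by gcongr; exact h α'
    _ = _ := by
      simp_rw [mul_sum, sum_div, Nat.cast_mul,
        Real.mul_rpow (Nat.cast_nonneg _) (Nat.cast_nonneg _)]
      exact sum_congr rfl fun γ _ => by ring

end

theorem rnorm_oprodFamily_mmul_le_general {n n' m q' : ℕ} {F : Type*} [RCLike F]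
    (ρ ϱ : ℝ) (hρ : 1 < ρ) (hconj : 1 / ρ + 1 / ϱ = 1)
    (hs : Fin m → (Fin n → F)) (A : MMat n n' m q' F) :
    rnorm ρ (mmul (fun (z : MIdx n 0) (γ : MIdx n m) =>
        oprodRowFamily m (fun i => rowOf (hs i)) z γ / (m.factorial : F)) A) ≤
      (∏ i, vnorm ϱ (hs i)) * rnorm ρ A := by
  have hϱρ : ϱ.HolderConjugate ρ :=
    (Real.holderConjugate_iff.mpr ⟨hρ, by simpa only [one_div] using hconj⟩).symm
  exact rnorm_le_mul_rnorm_of_forall_norm_rpow_le hϱρ.symm.pos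
    (prod_nonneg fun i _ => vnorm_nonneg ϱ (hs i)) fun α' =>
      norm_sum_oprodRowFamily_div_mul_rpow_le hϱρ hs default (A · α')

/-- For `1 < ρ < ∞` with conjugate exponent `ϱ`, all `m, q'`,
`A ∈ M_{n,n'}(m,q';F)` and row vectors `h¹,…,hᵐ ∈ M_{n,n}(0,1;F)`:
`‖((h¹⊙h²⊙⋯⊙hᵐ)/m!)·A‖_ρ ≤ ‖h¹‖_ϱ·‖h²‖_ϱ⋯‖hᵐ‖_ϱ·‖A‖_ρ`. -/
theorem rnorm_oprodFamily_mmul_le {n n' m q' : ℕ} {F : Type*} [RCLike F] (hn : 0 < n)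
    (hn' : 0 < n') (ρ ϱ : ℝ) (hρ : 1 < ρ) (hconj : 1 / ρ + 1 / ϱ = 1)
    (hs : Fin m → (Fin n → F)) (A : MMat n n' m q' F) :
    rnorm ρ (mmul (fun (z : MIdx n 0) (γ : MIdx n m) =>
        oprodRowFamily m (fun i => rowOf (hs i)) z γ / (m.factorial : F)) A) ≤
      (∏ i, vnorm ϱ (hs i)) * rnorm ρ A :=
  rnorm_oprodFamily_mmul_le_general ρ ϱ hρ hconj hs A
end
end

section
/- Let 1 ≤ ρ < ∞ with conjugate exponent ϱ (1/ρ + 1/ϱ = 1; ϱ = ∞ when ρ = 1). Set r = limsup_{m→∞} ‖A(m)‖_ρ^{1/m} and R = 1/r (R = ∞ if r = 0). Then the power series Σ_{m≥0} x^{(m)}/m!·A(m) is absolutely convergent at every h ∈ F^n with ‖h‖_ϱ < R. -/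
open scoped BigOperators ENNReal

noncomputable section

/-! Bounding one entry of `A(m)` by `‖A(m)‖_ρ` costs the weight `(α! (m! q'!)^{ρ-1})^{1/ρ}`, so
the term of index `α` (with `|α| = m`) is at most `q'!^{1/ϱ} ‖A(m)‖_ρ · |h^α| (m!/α!)^{1/ϱ}`, and
the multinomial theorem gives `|h^α|^ϱ · m!/α! ≤ ‖h‖_ϱ^{ϱ m}` (for `ϱ = ∞`, simply
`|h^α| ≤ ‖h‖_∞^m`). There are polynomially many `α` of degree `m`, and `‖A(m)‖_ρ ≤ w^{-m}`
eventually for any `‖h‖_ϱ < w < R`, so the degree-`m` blocks are dominated by a polynomial times a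
convergent geometric series. -/

open Filter

lemma mfact_pos {n : ℕ} (α : Fin n → ℕ) : 0 < mfact α :=
  Finset.prod_pos fun _ _ => Nat.factorial_pos _

lemma MIdx.apply_le {n m : ℕ} (β : MIdx n m) (i : Fin n) : β.1 i ≤ m :=
  (Finset.single_le_sum (fun j _ => Nat.zero_le (β.1 j)) (Finset.mem_univ i)).trans_eq β.2

lemma card_MIdx_le_descFactorial (n m : ℕ) : Fintype.card (MIdx n m) ≤ (m + n).descFactorial n := by
  have hinj : Function.Injective fun (β : MIdx n m) (i : Fin n) =>
      (⟨β.1 i, Nat.lt_succ_of_le (β.apply_le i)⟩ : Fin (m + 1)) := fun β γ hβγ =>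
    Subtype.ext <| funext fun i => congrArg Fin.val (congrFun hβγ i)
  calc Fintype.card (MIdx n m) ≤ Fintype.card (Fin n → Fin (m + 1)) :=
        Fintype.card_le_of_injective _ hinj
    _ = (m + n + 1 - n) ^ n := by simp [Nat.add_right_comm m n 1]
    _ ≤ (m + n).descFactorial n := Nat.pow_sub_le_descFactorial _ _

lemma summable_of_summable_sum_mdeg {n : ℕ} {f : (Fin n → ℕ) → ℝ} (hf : ∀ α, 0 ≤ f α)
    (hsum : Summable fun m => ∑ β : MIdx n m, f β.1) : Summable f := by
  rw [← (Equiv.sigmaFiberEquiv mdeg).summable_iff]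
  exact (summable_sigma_of_nonneg fun _ => hf _).2
    ⟨fun _ => .of_finite, by simp only [tsum_fintype]; exact hsum⟩

lemma eventually_le_inv_pow_of_limsup_lt {a : ℕ → ℝ} {w : ℝ} (hw : 0 < w)
    (ha : Filter.atTop.limsup (fun m : ℕ => ENNReal.ofReal (a m) ^ (1 / (m : ℝ))) <
      (ENNReal.ofReal w)⁻¹) :
    ∀ᶠ m in atTop, a m ≤ w⁻¹ ^ m := by
  filter_upwards [eventually_lt_of_limsup_lt ha, eventually_ge_atTop 1] with m hm hm1
  have hm0 : (m : ℝ) ≠ 0 := by positivity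
  have hle : ENNReal.ofReal (a m) ≤ (ENNReal.ofReal w)⁻¹ ^ m :=
    calc ENNReal.ofReal (a m) = (ENNReal.ofReal (a m) ^ (1 / (m : ℝ))) ^ m := by
          rw [← ENNReal.rpow_natCast, ← ENNReal.rpow_mul, one_div_mul_cancel hm0,
            ENNReal.rpow_one]
      _ ≤ (ENNReal.ofReal w)⁻¹ ^ m := pow_le_pow_left' hm.le m
  rwa [← ENNReal.ofReal_inv_of_pos hw, ← ENNReal.ofReal_pow (by positivity),
    ENNReal.ofReal_le_ofReal_iff (by positivity)] at hle

lemma summable_descFactorial_mul_of_limsup_lt {a : ℕ → ℝ} {v : ℝ} (ha : ∀ m, 0 ≤ a m)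
    (hv : 0 ≤ v) (k : ℕ)
    (hlt : ENNReal.ofReal v <
      1 / Filter.atTop.limsup fun m : ℕ => ENNReal.ofReal (a m) ^ (1 / (m : ℝ))) :
    Summable fun m => ((m + k).descFactorial k : ℝ) * (a m * v ^ m) := by
  obtain ⟨w, -, hvw, hwL⟩ := ENNReal.lt_iff_exists_real_btwn.1 hlt
  have hvw : v < w := (ENNReal.ofReal_lt_ofReal_iff_of_nonneg hv).1 hvw
  have hw : 0 < w := hv.trans_lt hvw
  have hr : ‖v / w‖ < 1 := by
    rwa [Real.norm_of_nonneg (by positivity), div_lt_one hw]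
  rw [one_div, ENNReal.lt_inv_iff_lt_inv] at hwL
  refine (summable_descFactorial_mul_geometric_of_norm_lt_one k hr).of_norm_bounded_eventually_nat ?_
  filter_upwards [eventually_le_inv_pow_of_limsup_lt hw hwL] with m hm
  have ham := ha m
  rw [Real.norm_of_nonneg (by positivity)]
  calc ((m + k).descFactorial k : ℝ) * (a m * v ^ m)
      ≤ ((m + k).descFactorial k : ℝ) * (w⁻¹ ^ m * v ^ m) := by gcongr
    _ = ((m + k).descFactorial k : ℝ) * (v / w) ^ m := by rw [div_pow, inv_pow]; ring

lemma multinomial_mul_prod_pow_le_sum_pow {n : ℕ} {y : Fin n → ℝ} (hy : ∀ i, 0 ≤ y i)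
    (β : Fin n → ℕ) :
    ((mdeg β).factorial : ℝ) / mfact β * ∏ i, y i ^ β i ≤ (∑ i, y i) ^ mdeg β := by
  have hcoef : ((mdeg β).factorial : ℝ) / mfact β = Nat.multinomial Finset.univ β := by
    rw [div_eq_iff (by exact_mod_cast (mfact_pos β).ne'), mul_comm]
    exact_mod_cast (Nat.multinomial_spec Finset.univ β).symm
  rw [hcoef, Finset.sum_pow_eq_sum_piAntidiag]
  exact Finset.single_le_sum (f := fun k => (Nat.multinomial Finset.univ k : ℝ) * ∏ i, y i ^ k i)
    (fun k _ => mul_nonneg (Nat.cast_nonneg _) (Finset.prod_nonneg fun i _ => pow_nonneg (hy i) _))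
    (by simp [Finset.mem_piAntidiag, mdeg])

lemma norm_prod_pow_le_iSup_pow {n : ℕ} {F : Type*} [RCLike F] (h : Fin n → F)
    (β : Fin n → ℕ) : ‖∏ i, h i ^ β i‖ ≤ (⨆ i, ‖h i‖) ^ mdeg β := by
  rw [norm_prod, mdeg, ← Finset.prod_pow_eq_pow_sum]
  exact Finset.prod_le_prod (fun i _ => norm_nonneg _) fun i _ => by
    rw [norm_pow]
    exact pow_le_pow_left₀ (norm_nonneg _)
      (le_ciSup (Finite.bddAbove_range fun j => ‖h j‖) i) _

lemma norm_prod_pow_mul_rpow_le_vnorm_pow {n : ℕ} {F : Type*} [RCLike F] (h : Fin n → F)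
    {q : ℝ} (hq : 0 < q) (β : Fin n → ℕ) :
    ‖∏ i, h i ^ β i‖ * (((mdeg β).factorial : ℝ) / mfact β) ^ (1 / q) ≤ vnorm q h ^ mdeg β := by
  set c : ℝ := (mdeg β).factorial / mfact β
  have hc : 0 ≤ c := by positivity
  have key : c * ‖∏ i, h i ^ β i‖ ^ q ≤ (∑ i, ‖h i‖ ^ q) ^ mdeg β := by
    convert multinomial_mul_prod_pow_le_sum_pow
      (fun i => Real.rpow_nonneg (norm_nonneg (h i)) q) β using 2
    rw [norm_prod, ← Real.finsetProd_rpow _ _ fun i _ => norm_nonneg _]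
    exact Finset.prod_congr rfl fun i _ => by rw [norm_pow, Real.rpow_pow_comm (norm_nonneg _)]
  calc ‖∏ i, h i ^ β i‖ * c ^ (1 / q) = (c * ‖∏ i, h i ^ β i‖ ^ q) ^ (1 / q) := by
        rw [Real.mul_rpow hc (by positivity), ← Real.rpow_mul (norm_nonneg _),
          mul_one_div_cancel hq.ne', Real.rpow_one, mul_comm]
    _ ≤ ((∑ i, ‖h i‖ ^ q) ^ mdeg β) ^ (1 / q) := by gcongr
    _ = vnorm q h ^ mdeg β := by rw [vnorm, ← Real.rpow_pow_comm (by positivity)]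

lemma norm_prod_pow_mul_rpow_le_vnormE_pow {n : ℕ} {F : Type*} [RCLike F] (h : Fin n → F)
    {σ : ℝ≥0∞} (hσ : σ ≠ 0) (β : Fin n → ℕ) :
    ‖∏ i, h i ^ β i‖ * (((mdeg β).factorial : ℝ) / mfact β) ^ σ⁻¹.toReal ≤
      vnormE σ h ^ mdeg β := by
  by_cases hσ' : σ = ∞
  · simpa [hσ', vnormE] using norm_prod_pow_le_iSup_pow h β
  · rw [vnormE, if_neg hσ', ENNReal.toReal_inv, ← one_div]
    exact norm_prod_pow_mul_rpow_le_vnorm_pow h (ENNReal.toReal_pos hσ hσ') β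

lemma vnormE_nonneg {n : ℕ} {F : Type*} [RCLike F] (σ : ℝ≥0∞) (h : Fin n → F) :
    0 ≤ vnormE σ h := by
  unfold vnormE
  split_ifs
  · exact Real.iSup_nonneg fun i => norm_nonneg _
  · positivity

lemma rnorm_nonneg {n n' p p' : ℕ} {F : Type*} [RCLike F] (ρ : ℝ) (A : MMat n n' p p' F) :
    0 ≤ rnorm ρ A := by
  unfold rnorm
  positivity

lemma norm_apply_le_rnorm {n n' p p' : ℕ} {F : Type*} [RCLike F] {ρ : ℝ} (hρ : 0 < ρ)
    (A : MMat n n' p p' F) (α : MIdx n p) (α' : MIdx n' p') :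
    ‖A α α'‖ ≤ rnorm ρ A *
      ((mfact α.1 : ℝ) * ((p.factorial * p'.factorial : ℕ) : ℝ) ^ (ρ - 1)) ^ (1 / ρ) := by
  set w : MIdx n p → ℝ :=
    fun a => (mfact a.1 : ℝ) * ((p.factorial * p'.factorial : ℕ) : ℝ) ^ (ρ - 1)
  have hw : ∀ a, 0 < w a := fun a =>
    mul_pos (by exact_mod_cast mfact_pos _) (Real.rpow_pos_of_pos (by positivity) _)
  set T := ∑ a, ∑ a', ‖A a a'‖ ^ ρ / w a
  have hterm : ∀ a a', 0 ≤ ‖A a a'‖ ^ ρ / w a := fun a a' => by have := hw a; positivity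
  have hT : ‖A α α'‖ ^ ρ / w α ≤ T :=
    (Finset.single_le_sum (fun a' _ => hterm α a') (Finset.mem_univ α')).trans
      (Finset.single_le_sum (f := fun a => ∑ a', ‖A a a'‖ ^ ρ / w a)
        (fun a _ => Finset.sum_nonneg fun a' _ => hterm a a') (Finset.mem_univ α))
  calc ‖A α α'‖ = (‖A α α'‖ ^ ρ) ^ (1 / ρ) := by
        rw [← Real.rpow_mul (norm_nonneg _), mul_one_div_cancel hρ.ne', Real.rpow_one]
    _ ≤ (T * w α) ^ (1 / ρ) := by gcongr; exact (div_le_iff₀ (hw α)).1 hT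
    _ = rnorm ρ A * w α ^ (1 / ρ) := Real.mul_rpow ((hterm α α').trans hT) (hw α).le

lemma mul_rpow_sub_one_rpow_inv_div {b c ρ : ℝ} (hb : 0 < b) (hc : 0 ≤ c) (hρ : 0 < ρ) :
    (b * c ^ (ρ - 1)) ^ (1 / ρ) / b = (c / b) ^ (1 - 1 / ρ) := by
  have hexp : (ρ - 1) * (1 / ρ) = 1 - 1 / ρ := by field_simp
  have hsplit : b ^ (1 / ρ) * b ^ (1 - 1 / ρ) = b := by
    rw [← Real.rpow_add hb, add_sub_cancel, Real.rpow_one]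
  rw [Real.mul_rpow hb.le (Real.rpow_nonneg hc _), ← Real.rpow_mul hc, hexp,
    Real.div_rpow hc hb.le, div_eq_div_iff hb.ne' (Real.rpow_pos_of_pos hb _).ne',
    mul_right_comm, hsplit, mul_comm]

lemma norm_monomial_div_mul_le {n n' m q' : ℕ} {F : Type*} [RCLike F] {ρ : ℝ} (hρ : 0 < ρ)
    (A : MMat n n' m q' F) (h : Fin n → F) (β : MIdx n m) (α' : MIdx n' q') :
    ‖(∏ i, h i ^ β.1 i) / (mfact β.1 : F) * A β α'‖ ≤
      (q'.factorial : ℝ) ^ (1 - 1 / ρ) * rnorm ρ A *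
        (‖∏ i, h i ^ β.1 i‖ * ((m.factorial : ℝ) / mfact β.1) ^ (1 - 1 / ρ)) := by
  have hb : (0 : ℝ) < mfact β.1 := by exact_mod_cast mfact_pos _
  rw [norm_mul, norm_div, RCLike.norm_natCast]
  calc ‖∏ i, h i ^ β.1 i‖ / mfact β.1 * ‖A β α'‖
      ≤ ‖∏ i, h i ^ β.1 i‖ / mfact β.1 * (rnorm ρ A *
          ((mfact β.1 : ℝ) * ((m.factorial * q'.factorial : ℕ) : ℝ) ^ (ρ - 1)) ^ (1 / ρ)) := by
        gcongr
        exact norm_apply_le_rnorm hρ A β α'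
    _ = rnorm ρ A * ‖∏ i, h i ^ β.1 i‖ *
          (((m.factorial * q'.factorial : ℕ) : ℝ) / mfact β.1) ^ (1 - 1 / ρ) := by
        rw [← mul_rpow_sub_one_rpow_inv_div hb (Nat.cast_nonneg _) hρ]
        ring
    _ = _ := by
        rw [Nat.cast_mul, mul_comm (m.factorial : ℝ), mul_div_assoc,
          Real.mul_rpow (by positivity) (by positivity)]
        ring

lemma toReal_inv_of_one_div_add_one_div_eq_one {ρ : ℝ} (hρ : 0 < ρ) {ϱ : ℝ≥0∞}
    (hconj : 1 / ENNReal.ofReal ρ + 1 / ϱ = 1) : ϱ⁻¹.toReal = 1 - 1 / ρ := by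
  have hle : 1 / ENNReal.ofReal ρ ≤ 1 := le_self_add.trans_eq hconj
  have hfin : 1 / ENNReal.ofReal ρ ≠ ∞ := ne_top_of_le_ne_top ENNReal.one_ne_top hle
  rw [← one_div, ENNReal.eq_sub_of_add_eq hfin ((add_comm _ _).trans hconj),
    ENNReal.toReal_sub_of_le hle ENNReal.one_ne_top, one_div, ENNReal.toReal_inv,
    ENNReal.toReal_ofReal hρ.le]
  simp

lemma norm_monomial_div_mul_le_vnormE_pow {n n' m q' : ℕ} {F : Type*} [RCLike F] {ρ : ℝ}
    (hρ : 0 < ρ) {ϱ : ℝ≥0∞} (hconj : 1 / ENNReal.ofReal ρ + 1 / ϱ = 1) (A : MMat n n' m q' F)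
    (h : Fin n → F) (β : MIdx n m) (α' : MIdx n' q') :
    ‖(∏ i, h i ^ β.1 i) / (mfact β.1 : F) * A β α'‖ ≤
      (q'.factorial : ℝ) ^ (1 - 1 / ρ) * (rnorm ρ A * vnormE ϱ h ^ m) := by
  have hϱ : ϱ ≠ 0 := by
    rintro rfl
    simp at hconj
  obtain ⟨β, rfl⟩ := β
  refine (norm_monomial_div_mul_le hρ A h ⟨β, rfl⟩ α').trans ?_
  rw [mul_assoc, ← toReal_inv_of_one_div_add_one_div_eq_one hρ hconj]
  have := rnorm_nonneg ρ A
  gcongr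
  exact norm_prod_pow_mul_rpow_le_vnormE_pow h hϱ β

theorem absConv_of_lt_radius_general {n n' q' : ℕ} {F : Type*} [RCLike F]
    (ρ : ℝ) (hρ : 1 ≤ ρ) (ϱ : ℝ≥0∞) (hconj : 1 / ENNReal.ofReal ρ + 1 / ϱ = 1)
    (A : (m : ℕ) → MMat n n' m q' F) (h : Fin n → F)
    (hlt : ENNReal.ofReal (vnormE ϱ h) < 1 / convRadiusInv ρ A) :
    AbsConvAt A h := by
  intro α'
  have hρ0 : 0 < ρ := one_pos.trans_le hρ
  set C : ℝ := (q'.factorial : ℝ) ^ (1 - 1 / ρ)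
  set v := vnormE ϱ h
  have hroot := (summable_descFactorial_mul_of_limsup_lt (fun m => rnorm_nonneg ρ (A m))
    (vnormE_nonneg ϱ h) n hlt).mul_left C
  refine summable_of_summable_sum_mdeg (fun _ => norm_nonneg _) <|
    .of_nonneg_of_le (fun m => Finset.sum_nonneg fun _ _ => norm_nonneg _) (fun m => ?_) hroot
  calc ∑ β : MIdx n m, ‖(∏ i, h i ^ β.1 i) / (mfact β.1 : F) * A (mdeg β.1) ⟨β.1, rfl⟩ α'‖
      ≤ ∑ _β : MIdx n m, C * (rnorm ρ (A m) * v ^ m) := Finset.sum_le_sum fun β _ => by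
        obtain ⟨β, rfl⟩ := β
        exact norm_monomial_div_mul_le_vnormE_pow hρ0 hconj (A _) h ⟨β, rfl⟩ α'
    _ = C * (Fintype.card (MIdx n m) * (rnorm ρ (A m) * v ^ m)) := by
        rw [Finset.sum_const, Finset.card_univ, nsmul_eq_mul]
        ring
    _ ≤ C * ((m + n).descFactorial n * (rnorm ρ (A m) * v ^ m)) := by
        have := rnorm_nonneg ρ (A m)
        have := vnormE_nonneg ϱ h
        gcongr
        exact_mod_cast card_MIdx_le_descFactorial n m

/-- For `1 ≤ ρ < ∞` with conjugate exponent `ϱ` (computed in `ℝ≥0∞`, so `ϱ = ∞`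
when `ρ = 1`), with `r = limsup_m ‖A(m)‖_ρ^{1/m}` and `R = 1/r`, the power series
`Σ_m x^{(m)}/m!·A(m)` is absolutely convergent at every `h ∈ F^n` with `‖h‖_ϱ < R`. -/
theorem absConv_of_lt_radius {n n' q' : ℕ} {F : Type*} [RCLike F] (hn : 0 < n) (hn' : 0 < n')
    (ρ : ℝ) (hρ : 1 ≤ ρ) (ϱ : ℝ≥0∞) (hconj : 1 / ENNReal.ofReal ρ + 1 / ϱ = 1)
    (A : (m : ℕ) → MMat n n' m q' F) (h : Fin n → F)
    (hlt : ENNReal.ofReal (vnormE ϱ h) < 1 / convRadiusInv ρ A) :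
    AbsConvAt A h :=
  absConv_of_lt_radius_general ρ hρ ϱ hconj A h hlt

end
end
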